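/- Let g be the Lie algebra of Sol with basis X1,X2,X3, [X1,X2]=X2, [X1,X3]=-X3, [X2,X3]=0, with the Lorentzian inner product whose matrix in this basis is [[0,0,1],[0,1,0],[1,0,0]]. Then the Ricci tensor matrix is diag(-2,0,0), the scalar curvature is 0, and the Ricci operator satisfies Ric² = 0 but Ric ≠ 0. -/

import Mathlib

noncomputable section

/-- The `sol` bracket in the standard basis `(X1,X2,X3)`:
`[X1,X2]=X2`, `[X1,X3]=-X3`, `[X2,X3]=0`. -/
def br (w z : Fin 3 → ℝ) : Fin 3 → ℝ :=
  ![0, w 0 * z 1 - w 1 * z 0, -(w 0 * z 2 - w 2 * z 0)]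

/-- The Lorentzian metric with matrix `[[0,0,1],[0,1,0],[1,0,0]]`. -/
def G : Matrix (Fin 3) (Fin 3) ℝ := !![0, 0, 1; 0, 1, 0; 1, 0, 0]

/-- The corresponding inner product. -/
def ip (x y : Fin 3 → ℝ) : ℝ := dotProduct x (G.mulVec y)

lemma ip_eval (v w : Fin 3 → ℝ) :
    ip v w = v 0 * w 2 + v 1 * w 1 + v 2 * w 0 := by
  simp only [ip, G, Matrix.mulVec, dotProduct, Fin.sum_univ_three,
    Matrix.cons_val_zero, Matrix.cons_val_one, Matrix.head_cons,
    Matrix.cons_val_two, Matrix.tail_cons, Matrix.head_fin_const,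
    Matrix.cons_val', Matrix.empty_val', Matrix.cons_val_fin_one, Matrix.of_apply]
  ring

lemma single0 : (Pi.single (0 : Fin 3) (1 : ℝ)) = ![1, 0, 0] := by
  funext j; fin_cases j <;> simp

lemma single1 : (Pi.single (1 : Fin 3) (1 : ℝ)) = ![0, 1, 0] := by
  funext j; fin_cases j <;> simp

lemma single2 : (Pi.single (2 : Fin 3) (1 : ℝ)) = ![0, 0, 1] := by
  funext j; fin_cases j <;> simp

/-- With the Levi-Civita product `L` given by Koszul's formula, curvature
`K(x,y) = L_{[x,y]} - [L_x,L_y]` and Ricci tensor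
`ric(x,y) = tr(w ↦ K(x,w)y)`: the matrix of `ric` is `diag(-2,0,0)`, the
scalar curvature is `0`, and the Ricci operator `Ric` (defined by
`⟨Ric x, y⟩ = ric(x,y)`) satisfies `Ric² = 0` but `Ric ≠ 0`. -/
theorem ricci_sol03
    (L : (Fin 3 → ℝ) → (Fin 3 → ℝ) → (Fin 3 → ℝ))
    (hL : ∀ x y z, 2 * ip (L x y) z =
      ip (br x y) z + ip (br z x) y + ip (br z y) x)
    (K : (Fin 3 → ℝ) → (Fin 3 → ℝ) → (Fin 3 → ℝ) → (Fin 3 → ℝ))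
    (hK : ∀ x y z, K x y z = L (br x y) z - L x (L y z) + L y (L x z))
    (ric : (Fin 3 → ℝ) → (Fin 3 → ℝ) → ℝ)
    (hric : ∀ x y, ric x y = ∑ i : Fin 3, K x (Pi.single i 1) y i) :
    (∀ i j : Fin 3, ric (Pi.single i 1) (Pi.single j 1) =
      Matrix.diagonal ![(-2 : ℝ), 0, 0] i j) ∧
    (∀ R : Matrix (Fin 3) (Fin 3) ℝ,
      (∀ x y, ip (R.mulVec x) y = ric x y) →
      R.trace = 0 ∧ R * R = 0 ∧ R ≠ 0) := by
  have hLf : ∀ x y, L x y = ![x 0 * y 0, -(x 1 * y 0), x 1 * y 1 - x 0 * y 2] := by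
    intro x y
    funext i
    fin_cases i
    · have h := hL x y ![0, 0, 1]
      simp only [ip_eval, br, Matrix.cons_val_zero, Matrix.cons_val_one,
        Matrix.head_cons, Matrix.cons_val_two, Matrix.tail_cons] at h
      show L x y 0 = x 0 * y 0
      nlinarith [h]
    · have h := hL x y ![0, 1, 0]
      simp only [ip_eval, br, Matrix.cons_val_zero, Matrix.cons_val_one,
        Matrix.head_cons, Matrix.cons_val_two, Matrix.tail_cons] at h
      show L x y 1 = -(x 1 * y 0)
      nlinarith [h]
    · have h := hL x y ![1, 0, 0]
      simp only [ip_eval, br, Matrix.cons_val_zero, Matrix.cons_val_one,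
        Matrix.head_cons, Matrix.cons_val_two, Matrix.tail_cons] at h
      show L x y 2 = x 1 * y 1 - x 0 * y 2
      nlinarith [h]
  have hric' : ∀ i j : Fin 3, ric (Pi.single i 1) (Pi.single j 1) =
      Matrix.diagonal ![(-2 : ℝ), 0, 0] i j := by
    intro i j
    rw [hric]
    fin_cases i <;> fin_cases j <;>
      simp [hK, hLf, br, single0, single1, single2, Fin.sum_univ_three,
        Matrix.diagonal] <;> norm_num
  refine ⟨hric', ?_⟩
  intro R hR
  have hent : ∀ i j : Fin 3, ip (R.mulVec (Pi.single i 1)) (Pi.single j 1) =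
      Matrix.diagonal ![(-2 : ℝ), 0, 0] i j := fun i j => (hR _ _).trans (hric' i j)
  have hRval : R = !![0, 0, 0; 0, 0, 0; -2, 0, 0] := by
    ext a b
    fin_cases a <;> fin_cases b <;>
    · first
      | (have h := hent 0 2; simp [ip_eval, single0, single2, Matrix.mulVec,
          dotProduct, Fin.sum_univ_three, Matrix.diagonal] at h; simpa using h)
      | (have h := hent 1 2; simp [ip_eval, single1, single2, Matrix.mulVec,
          dotProduct, Fin.sum_univ_three, Matrix.diagonal] at h; simpa using h)
      | (have h := hent 2 2; simp [ip_eval, single2, Matrix.mulVec,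
          dotProduct, Fin.sum_univ_three, Matrix.diagonal] at h; simpa using h)
      | (have h := hent 0 1; simp [ip_eval, single0, single1, Matrix.mulVec,
          dotProduct, Fin.sum_univ_three, Matrix.diagonal] at h; simpa using h)
      | (have h := hent 1 1; simp [ip_eval, single1, Matrix.mulVec,
          dotProduct, Fin.sum_univ_three, Matrix.diagonal] at h; simpa using h)
      | (have h := hent 2 1; simp [ip_eval, single1, single2, Matrix.mulVec,
          dotProduct, Fin.sum_univ_three, Matrix.diagonal] at h; simpa using h)
      | (have h := hent 0 0; simp [ip_eval, single0, Matrix.mulVec,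
          dotProduct, Fin.sum_univ_three, Matrix.diagonal] at h; simpa using h)
      | (have h := hent 1 0; simp [ip_eval, single0, single1, Matrix.mulVec,
          dotProduct, Fin.sum_univ_three, Matrix.diagonal] at h; simpa using h)
      | (have h := hent 2 0; simp [ip_eval, single0, single2, Matrix.mulVec,
          dotProduct, Fin.sum_univ_three, Matrix.diagonal] at h; simpa using h)
  subst hRval
  refine ⟨?_, ?_, ?_⟩
  · simp [Matrix.trace, Fin.sum_univ_three, Matrix.diag, Matrix.vecHead, Matrix.vecTail]
  · ext a b
    fin_cases a <;> fin_cases b <;>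
      simp [Matrix.mul_apply, Fin.sum_univ_three]
  · intro h
    have := congrFun (congrFun h 2) 0
    change (-2 : ℝ) = 0 at this
    norm_num at this
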